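/- arXiv:1506.04660 — 2 statements merged into one kernel-verified Lean document; each statement's English description precedes it below -/
import Mathlib

section
/- Let R be an associative algebra over a commutative ring and T : R → S a linear map with T(xy) = T(yx) for all x, y. Let P, Q ∈ R be such that every product containing Q in three or more positions vanishes (QxQyQ = 0 for all x, y ∈ R). Then for every k ≥ 2: T((P+Q)^{2k}) = T(P^{2k}) + 2k·T(P^{2k−1}Q) + 2k·∑_{l=0}^{k−2} T(P^{2(k−l−1)}(P^lQ)²) + k·T((P^{k−1}Q)²), and T((P+Q)^{2k+1}) = T(P^{2k+1}) + (2k+1)·T(P^{2k}Q) + (2k+1)·∑_{l=0}^{k−1} T(P^{2(k−l)−1}(P^lQ)²). -/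
/-!
Expand `(P + Q) ^ n` into words in `P` and `Q`. Every word with three or more letters `Q`
contains a factor `Q x Q y Q` and vanishes, so only the words with at most two `Q`'s survive.
Cyclicity of `T` makes the value of a word depend only on its necklace: each of the `n` one-`Q`
words gives `T (P ^ (n - 1) * Q)`, and `P ^ i * Q * P ^ c * Q * P ^ b` gives
`T (P ^ d * Q * P ^ c * Q)` with `d = i + b`, which is hit by `d + 1` words. The necklaces
`(d, c)` and `(c, d)` coincide, so pairing them gives total weight `(d + 1) + (c + 1) = n`,
except for the self-paired necklace `d = c` (only for even `n`), which keeps weight `n / 2`.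
-/

open Finset

namespace Finset

variable {M : Type*} [AddCommMonoid M]

theorem sum_range_add_add_reflect (g : ℕ → M) (m r : ℕ) :
    ∑ j ∈ range (m + r + m), g j =
      ∑ j ∈ range m, (g j + g (m + r + m - 1 - j)) + ∑ j ∈ range r, g (m + j) := by
  rw [sum_range_add, sum_range_add, ← sum_range_reflect (fun j => g (m + r + j)), add_right_comm,
    ← sum_add_distrib]
  congr 1
  refine sum_congr rfl fun j hj => ?_
  rw [mem_range] at hj
  rw [show m + r + (m - 1 - j) = m + r + m - 1 - j by omega]

namespace Nat

theorem sum_antidiagonal_sum_antidiagonal_fst_comm (f : ℕ → ℕ → ℕ → M) (n : ℕ) :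
    ∑ p ∈ antidiagonal n, ∑ q ∈ antidiagonal p.1, f q.1 q.2 p.2 =
      ∑ p ∈ antidiagonal n, ∑ q ∈ antidiagonal p.1, f q.1 p.2 q.2 := by
  rw [sum_sigma', sum_sigma']
  let e : (_ : ℕ × ℕ) × (ℕ × ℕ) → (_ : ℕ × ℕ) × (ℕ × ℕ) :=
    fun x => ⟨(x.2.1 + x.1.2, x.2.2), (x.2.1, x.1.2)⟩
  refine sum_nbij' e e ?_ ?_ ?_ ?_ ?_ <;>
    simp +contextual only [e, mem_sigma, HasAntidiagonal.mem_antidiagonal, Prod.mk.eta,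
      Sigma.eta, and_imp, and_true, implies_true]
  all_goals omega

theorem sum_antidiagonal_two_mul_nsmul_of_symm {f : ℕ → ℕ → M} (hf : ∀ a b, f a b = f b a)
    (m : ℕ) :
    ∑ p ∈ antidiagonal (2 * m), (p.1 + 1) • f p.1 p.2 =
      (2 * m + 2) • ∑ l ∈ range m, f (2 * m - l) l + (m + 1) • f m m := by
  rw [sum_antidiagonal_eq_sum_range_succ (fun a b => (a + 1) • f a b),
    show (2 * m).succ = m + 1 + m by omega, sum_range_add_add_reflect, sum_range_one, smul_sum]
  congr 1
  · refine sum_congr rfl fun j hj => ?_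
    rw [mem_range] at hj
    rw [show m + 1 + m - 1 - j = 2 * m - j by omega, show 2 * m - (2 * m - j) = j by omega,
      hf j, ← add_nsmul]
    congr 1
    omega
  · rw [add_zero, show 2 * m - m = m by omega]

theorem sum_antidiagonal_two_mul_add_one_nsmul_of_symm {f : ℕ → ℕ → M}
    (hf : ∀ a b, f a b = f b a) (m : ℕ) :
    ∑ p ∈ antidiagonal (2 * m + 1), (p.1 + 1) • f p.1 p.2 =
      (2 * m + 3) • ∑ l ∈ range (m + 1), f (2 * m + 1 - l) l := by
  rw [sum_antidiagonal_eq_sum_range_succ (fun a b => (a + 1) • f a b),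
    show (2 * m + 1).succ = m + 1 + 0 + (m + 1) by omega, sum_range_add_add_reflect,
    sum_range_zero, add_zero, smul_sum]
  refine sum_congr rfl fun j hj => ?_
  rw [mem_range] at hj
  rw [show m + 1 + 0 + (m + 1) - 1 - j = 2 * m + 1 - j by omega,
    show 2 * m + 1 - (2 * m + 1 - j) = j by omega, hf j, ← add_nsmul]
  congr 1
  omega

end Nat

end Finset

section Words

variable {R : Type*} [Semiring R] (P Q : R)

def oneQWords (n : ℕ) : R := ∑ p ∈ antidiagonal n, P ^ p.1 * Q * P ^ p.2

def twoQWords (n : ℕ) : R := ∑ p ∈ antidiagonal n, oneQWords P Q p.1 * Q * P ^ p.2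

theorem oneQWords_zero : oneQWords P Q 0 = Q := by
  simp [oneQWords]

theorem oneQWords_succ (n : ℕ) :
    oneQWords P Q (n + 1) = oneQWords P Q n * P + P ^ (n + 1) * Q := by
  rw [oneQWords, Nat.sum_antidiagonal_succ', oneQWords, sum_mul, add_comm]
  simp [pow_succ, mul_assoc]

theorem twoQWords_succ (n : ℕ) :
    twoQWords P Q (n + 1) = twoQWords P Q n * P + oneQWords P Q (n + 1) * Q := by
  rw [twoQWords, Nat.sum_antidiagonal_succ', twoQWords, sum_mul, add_comm]
  simp [pow_succ, mul_assoc]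

variable {P Q}

theorem twoQWords_mul_eq_zero (hQ : ∀ x y : R, Q * x * Q * y * Q = 0) (n : ℕ) :
    twoQWords P Q n * Q = 0 := by
  simp only [twoQWords, oneQWords, sum_mul]
  refine sum_eq_zero fun p _ => sum_eq_zero fun q _ => ?_
  simpa [mul_assoc] using congrArg (P ^ q.1 * ·) (hQ (P ^ q.2) (P ^ p.2))

theorem add_pow_eq_add_oneQWords_add_twoQWords (hQ : ∀ x y : R, Q * x * Q * y * Q = 0) (n : ℕ) :
    (P + Q) ^ (n + 2) = P ^ (n + 2) + oneQWords P Q (n + 1) + twoQWords P Q n := by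
  induction n with
  | zero =>
    simp only [twoQWords, oneQWords_succ, oneQWords_zero, Nat.antidiagonal_zero, sum_singleton]
    noncomm_ring
  | succ n ih =>
    rw [pow_succ, ih, oneQWords_succ P Q (n + 1), twoQWords_succ]
    simp only [add_mul, mul_add, twoQWords_mul_eq_zero hQ, ← pow_succ]
    abel

end Words

section Trace

variable {R S F : Type*} [Semiring R] [AddCommMonoid S] [FunLike F R S] [AddMonoidHomClass F R S]
  {T : F} (hT : ∀ x y : R, T (x * y) = T (y * x)) (P Q : R)
include hT

theorem map_oneQWords_of_cyclic (n : ℕ) : T (oneQWords P Q n) = (n + 1) • T (P ^ n * Q) := by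
  rw [oneQWords, map_sum, ← Nat.card_antidiagonal n, ← sum_const]
  refine sum_congr rfl fun p hp => ?_
  rw [hT, ← mul_assoc, ← pow_add, add_comm, mem_antidiagonal.mp hp]

theorem map_twoQWords_of_cyclic (n : ℕ) :
    T (twoQWords P Q n) =
      ∑ p ∈ antidiagonal n, (p.1 + 1) • T (P ^ p.1 * Q * (P ^ p.2 * Q)) := by
  simp only [twoQWords, oneQWords, sum_mul, map_sum]
  rw [Nat.sum_antidiagonal_sum_antidiagonal_fst_comm
    (fun a c b => T (P ^ a * Q * P ^ c * Q * P ^ b))]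
  refine sum_congr rfl fun p _ => ?_
  rw [← Nat.card_antidiagonal p.1, ← sum_const]
  refine sum_congr rfl fun q hq => ?_
  rw [hT, ← mem_antidiagonal.mp hq, add_comm, pow_add]
  simp only [mul_assoc]

theorem map_add_pow_of_cyclic (hQ : ∀ x y : R, Q * x * Q * y * Q = 0) (n : ℕ) :
    T ((P + Q) ^ (n + 2)) = T (P ^ (n + 2)) + (n + 2) • T (P ^ (n + 1) * Q) +
      ∑ p ∈ antidiagonal n, (p.1 + 1) • T (P ^ p.1 * Q * (P ^ p.2 * Q)) := by
  rw [add_pow_eq_add_oneQWords_add_twoQWords hQ, map_add, map_add, map_oneQWords_of_cyclic hT,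
    map_twoQWords_of_cyclic hT]

end Trace

/-- Cyclic-word counting for two `Q` insertions (Lemma 2): for a cyclic linear
map `T` and `P, Q` with all products containing three or more `Q`'s vanishing,
the expansions of `T((P+Q)^{2k})` and `T((P+Q)^{2k+1})` for `k ≥ 2` hold. -/
theorem cyclic_trace_necklace_expansion
    (𝕜 : Type*) [CommRing 𝕜] (R : Type*) [Ring R] [Algebra 𝕜 R]
    (S : Type*) [AddCommGroup S] [Module 𝕜 S]
    (T : R →ₗ[𝕜] S) (hcyc : ∀ x y : R, T (x * y) = T (y * x))
    (P Q : R) (hQ : ∀ x y : R, Q * x * Q * y * Q = 0) :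
    ∀ k : ℕ, 2 ≤ k →
      (T ((P + Q) ^ (2 * k)) = T (P ^ (2 * k)) + (2 * k) • T (P ^ (2 * k - 1) * Q)
        + (2 * k) • ∑ l ∈ Finset.range (k - 1), T (P ^ (2 * (k - l - 1)) * (P ^ l * Q) ^ 2)
        + k • T ((P ^ (k - 1) * Q) ^ 2)) ∧
      (T ((P + Q) ^ (2 * k + 1)) = T (P ^ (2 * k + 1)) + (2 * k + 1) • T (P ^ (2 * k) * Q)
        + (2 * k + 1) • ∑ l ∈ Finset.range k, T (P ^ (2 * (k - l) - 1) * (P ^ l * Q) ^ 2)) := by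
  intro k hk
  obtain ⟨m, rfl⟩ : ∃ m, k = m + 1 := ⟨k - 1, by omega⟩
  have hsq (a l : ℕ) : P ^ a * (P ^ l * Q) ^ 2 = P ^ (a + l) * Q * (P ^ l * Q) := by
    simp only [sq, pow_add, mul_assoc]
  have hsymm (a b : ℕ) := hcyc (P ^ a * Q) (P ^ b * Q)
  constructor
  · rw [show 2 * (m + 1) = 2 * m + 2 by ring, map_add_pow_of_cyclic hcyc P Q hQ,
      Nat.sum_antidiagonal_two_mul_nsmul_of_symm hsymm, Nat.add_sub_cancel, ← sq,
      Nat.add_succ_sub_one, ← add_assoc]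
    congr 3
    refine sum_congr rfl fun l hl => ?_
    rw [hsq, show 2 * (m + 1 - l - 1) + l = 2 * m - l by grind]
  · rw [show 2 * (m + 1) + 1 = 2 * m + 1 + 2 by ring, map_add_pow_of_cyclic hcyc P Q hQ,
      Nat.sum_antidiagonal_two_mul_add_one_nsmul_of_symm hsymm]
    refine congrArg _ (congrArg _ (sum_congr rfl fun l hl => ?_))
    rw [hsq, show 2 * (m + 1 - l) - 1 + l = 2 * m + 1 - l by grind]
end

section
/- Let θ(x) = log(1+x)/(1+x) and let ϑ be a local inverse of θ at 0 (ϑ(0) = 0, ϑ(θ(x)) = x near 0, θ(ϑ(y)) = y for y near 0). Then for all real c and all real γ such that γ·e^c lies in the domain of ϑ (a sufficiently small neighborhood of 0), the number X := e^c · (1 + ϑ(γ e^c)) satisfies X > 0 and log X − γ·X = c. -/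
theorem log_mul_one_add_sub_eq_log {X₀ γ v : ℝ} (hX₀ : 0 < X₀) (hv : 0 < 1 + v)
    (hθ : Real.log (1 + v) / (1 + v) = γ * X₀) :
    Real.log (X₀ * (1 + v)) - γ * (X₀ * (1 + v)) = Real.log X₀ := by
  have hlog : Real.log (1 + v) = γ * X₀ * (1 + v) := (div_eq_iff hv.ne').mp hθ
  rw [Real.log_mul hX₀.ne' hv.ne', hlog]
  ring

theorem modified_compensation_solution_general
    (ϑ : ℝ → ℝ) (ε : ℝ)
    (hdom : ∀ y : ℝ, |y| < ε → -1 < ϑ y)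
    (hright : ∀ y : ℝ, |y| < ε → Real.log (1 + ϑ y) / (1 + ϑ y) = y) :
    ∀ c γ : ℝ, |γ * Real.exp c| < ε →
      0 < Real.exp c * (1 + ϑ (γ * Real.exp c)) ∧
      Real.log (Real.exp c * (1 + ϑ (γ * Real.exp c)))
        - γ * (Real.exp c * (1 + ϑ (γ * Real.exp c))) = c := by
  intro c γ hγ
  have hv : 0 < 1 + ϑ (γ * Real.exp c) := by linarith [hdom _ hγ]
  refine ⟨mul_pos (Real.exp_pos c) hv, ?_⟩
  rw [log_mul_one_add_sub_eq_log (Real.exp_pos c) hv (hright _ hγ), Real.log_exp]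

/-- Scalar version of Lemma 7: if `ϑ` is a local inverse of
`θ(x) = log(1+x)/(1+x)` at `0`, then for all real `c, γ` with `γ e^c` in the
domain of `ϑ`, the number `X := e^c (1 + ϑ(γ e^c))` is positive and solves the
modified compensation equation `log X - γ X = c`. -/
theorem modified_compensation_solution
    (ϑ : ℝ → ℝ) (ε : ℝ) (hε : 0 < ε)
    (hϑ0 : ϑ 0 = 0)
    (hdom : ∀ y : ℝ, |y| < ε → -1 < ϑ y)
    (hright : ∀ y : ℝ, |y| < ε → Real.log (1 + ϑ y) / (1 + ϑ y) = y)
    (hleft : ∃ δ > (0 : ℝ), ∀ x : ℝ, |x| < δ →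
      ϑ (Real.log (1 + x) / (1 + x)) = x) :
    ∀ c γ : ℝ, |γ * Real.exp c| < ε →
      0 < Real.exp c * (1 + ϑ (γ * Real.exp c)) ∧
      Real.log (Real.exp c * (1 + ϑ (γ * Real.exp c)))
        - γ * (Real.exp c * (1 + ϑ (γ * Real.exp c))) = c :=
  modified_compensation_solution_general ϑ ε hdom hright
end
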